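/- Let C be a compact convex subset of ℝ² with positive area, let P be a point, and let A(θ) = area(C ∩ H(P,θ)) with H(P,θ) = {x : ⟨x − P, (−sin θ, cos θ)⟩ ≥ 0}. Suppose α < β with β − α < π, A(α) = 0 and A(β) = area(C). Then for every t with 0 < t < 1 there exists a unique θ ∈ [α, β] such that A(θ) = t · area(C): the line through P cutting off any prescribed proper fraction of the area, within one sweep, is unique. -/

import Mathlib

open MeasureTheory
open scoped RealInnerProductSpace ENNReal

/-!
The area `A θ` is continuous in `θ` because each boundary line is a null set (dominated
convergence), so the intermediate value theorem gives an angle with the prescribed area.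

For uniqueness, the points of `C` outside `H(P, α)` (all of `C` up to a null set) that lie in
`H(P, θ₁)` lie strictly inside `H(P, θ₂)` whenever `α < θ₁ < θ₂ < α + π`. If `A θ₁ = A θ₂`,
the open wedge between the two lines meets the open convex set `interior C \ H(P, α)` in a null,
hence empty, set. That set is then the disjoint union of the two relatively open pieces on either
side of the wedge, so by connectedness one of them is empty, i.e. `A θ₁ = 0` or `A θ₂ = area C`.
-/

open Set Topology Real

section DominatedConvergence

variable {X α : Type*} [TopologicalSpace X] [FirstCountableTopology X] [MeasurableSpace α]
  {μ : Measure α}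

theorem continuousAt_measure_inter_setOf_nonneg {s : Set α} (hs : MeasurableSet s)
    (hμs : μ s ≠ ∞) {g : X → α → ℝ} (hg_meas : ∀ θ, Measurable (g θ)) {θ₀ : X}
    (hg_cont : ∀ a, ContinuousAt (fun θ => g θ a) θ₀) (hnull : μ {a | g θ₀ a = 0} = 0) :
    ContinuousAt (fun θ => μ (s ∩ {a | 0 ≤ g θ a})) θ₀ := by
  have hmeas : ∀ θ, MeasurableSet (s ∩ {a | 0 ≤ g θ a}) :=
    fun θ => hs.inter (measurableSet_le measurable_const (hg_meas θ))
  simp_rw [← lintegral_indicator_one (hmeas _)]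
  refine tendsto_lintegral_filter_of_dominated_convergence (s.indicator 1)
    (.of_forall fun θ => measurable_const.indicator (hmeas θ))
    (.of_forall fun θ => .of_forall <| indicator_le_indicator_of_subset inter_subset_left (by simp))
    (by rwa [lintegral_indicator_one hs]) ?_
  filter_upwards [measure_eq_zero_iff_ae_notMem.1 hnull] with a ha
  have hsign : ∀ᶠ θ in 𝓝 θ₀, (0 ≤ g θ a ↔ 0 ≤ g θ₀ a) := by
    rcases lt_or_gt_of_ne ha with hneg | hpos
    · filter_upwards [(hg_cont a).eventually (gt_mem_nhds hneg)] with θ hθ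
      exact iff_of_false hθ.not_ge hneg.not_ge
    · filter_upwards [(hg_cont a).eventually (lt_mem_nhds hpos)] with θ hθ
      exact iff_of_true hθ.le hpos.le
  refine tendsto_const_nhds.congr' (hsign.mono fun θ hθ => ?_)
  exact indicator_eq_indicator (and_congr_right' hθ.symm) rfl

end DominatedConvergence

theorem IsPreconnected.exists_neg_and_pos {X : Type*} [TopologicalSpace X] {s : Set X}
    (hs : IsPreconnected s) {f g : X → ℝ} (hf : Continuous f) (hg : Continuous g)
    (hfg : ∀ x ∈ s, 0 ≤ f x → 0 < g x) (hf_nonneg : ∃ x ∈ s, 0 ≤ f x)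
    (hg_nonpos : ∃ x ∈ s, g x ≤ 0) : ∃ x ∈ s, f x < 0 ∧ 0 < g x := by
  by_contra! h
  have hcover : s ⊆ {x | 0 < g x} ∪ {x | f x < 0} := fun x hx =>
    (le_or_gt 0 (f x)).imp (hfg x hx) id
  have hdisj : s ∩ ({x | 0 < g x} ∩ {x | f x < 0}) = ∅ :=
    eq_empty_of_forall_notMem fun x ⟨hx, hgx, hfx⟩ => (h x hx hfx).not_gt hgx
  rcases isPreconnected_iff_subset_of_disjoint.1 hs _ _ (isOpen_lt continuous_const hg)
    (isOpen_lt hf continuous_const) hcover hdisj with hpos | hneg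
  · obtain ⟨x, hx, hgx⟩ := hg_nonpos
    exact (hpos hx).not_ge hgx
  · obtain ⟨x, hx, hfx⟩ := hf_nonneg
    exact (hneg hx).not_ge hfx

theorem addHaar_setOf_inner_sub_eq_zero {E : Type*} [NormedAddCommGroup E]
    [InnerProductSpace ℝ E] [FiniteDimensional ℝ E] [MeasurableSpace E] [BorelSpace E]
    (μ : Measure E) [μ.IsAddHaarMeasure] (P : E) {n : E} (hn : n ≠ 0) :
    μ {x | ⟪x - P, n⟫ = 0} = 0 := by
  let L := AffineSubspace.mk' P (LinearMap.ker (innerₛₗ ℝ n))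
  have hL : (L : Set E) = {x | ⟪x - P, n⟫ = 0} := by
    ext x
    simp [L, AffineSubspace.mem_mk', real_inner_comm]
  rw [← hL]
  refine Measure.addHaar_affineSubspace μ L fun htop => hn ?_
  have : P + n ∈ L := htop ▸ AffineSubspace.mem_top ℝ E _
  simpa [L, AffineSubspace.mem_mk'] using this

theorem Convex.interior_diff_ae_eq {E : Type*} [NormedAddCommGroup E] [NormedSpace ℝ E]
    [MeasurableSpace E] [BorelSpace E] [FiniteDimensional ℝ E] {μ : Measure E}
    [μ.IsAddHaarMeasure] {C s : Set E} (hC : Convex ℝ C) (hs : μ (C ∩ s) = 0) :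
    interior C \ s =ᵐ[μ] C := by
  refine ae_eq_set.2
    ⟨measure_mono_null (fun x hx => hx.2 (interior_subset hx.1.1)) measure_empty, ?_⟩
  refine measure_mono_null (fun x ⟨hxC, hxO⟩ => ?_) (measure_union_null (hC.addHaar_frontier μ) hs)
  by_cases hx : x ∈ interior C
  · exact .inr ⟨hxC, not_not.1 fun h => hxO ⟨hx, h⟩⟩
  · exact .inl ⟨subset_closure hxC, hx⟩

noncomputable def leftNormal (θ : ℝ) : EuclideanSpace ℝ (Fin 2) :=
  WithLp.toLp 2 ![-Real.sin θ, Real.cos θ]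

def halfPlane (P : EuclideanSpace ℝ (Fin 2)) (θ : ℝ) : Set (EuclideanSpace ℝ (Fin 2)) :=
  {x | 0 ≤ ⟪x - P, leftNormal θ⟫}

theorem inner_leftNormal (v : EuclideanSpace ℝ (Fin 2)) (θ : ℝ) :
    ⟪v, leftNormal θ⟫ = v 1 * cos θ - v 0 * sin θ := by
  simp only [leftNormal, PiLp.inner_apply, RCLike.inner_apply, ringHom_apply, Fin.sum_univ_two,
    Matrix.cons_val_zero, Matrix.cons_val_one, Matrix.cons_val_fin_one]
  ring

theorem leftNormal_ne_zero (θ : ℝ) : leftNormal θ ≠ 0 := fun h => by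
  have := congrArg (fun v : EuclideanSpace ℝ (Fin 2) => v 0 ^ 2 + v 1 ^ 2) h
  norm_num [leftNormal] at this

theorem sin_sub_mul_inner_leftNormal (v : EuclideanSpace ℝ (Fin 2)) (a b c : ℝ) :
    sin (b - a) * ⟪v, leftNormal c⟫
      = sin (c - a) * ⟪v, leftNormal b⟫ - sin (c - b) * ⟪v, leftNormal a⟫ := by
  simp only [inner_leftNormal, sin_sub]
  ring

theorem inner_leftNormal_pos_of_nonneg {v : EuclideanSpace ℝ (Fin 2)} {α θ₁ θ₂ : ℝ}
    (hα : ⟪v, leftNormal α⟫ < 0) (h₁ : 0 ≤ ⟪v, leftNormal θ₁⟫) (hαθ₁ : α < θ₁)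
    (hθ₁₂ : θ₁ < θ₂) (hθ₂ : θ₂ < α + π) : 0 < ⟪v, leftNormal θ₂⟫ := by
  have hsin : ∀ {x y}, x < y → y < x + π → 0 < sin (y - x) := fun h h' =>
    sin_pos_of_pos_of_lt_pi (by linarith) (by linarith)
  refine pos_of_mul_pos_right ?_ (hsin hαθ₁ (by linarith)).le
  rw [sin_sub_mul_inner_leftNormal v α θ₁ θ₂]
  nlinarith [hsin (hαθ₁.trans hθ₁₂) hθ₂, hsin hθ₁₂ (by linarith)]

theorem convex_compl_halfPlane (P : EuclideanSpace ℝ (Fin 2)) (θ : ℝ) :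
    Convex ℝ (halfPlane P θ)ᶜ := by
  have : (halfPlane P θ)ᶜ = {x | ⟪leftNormal θ, x⟫ < ⟪leftNormal θ, P⟫} := by
    ext x
    simp only [halfPlane, mem_compl_iff, mem_ofPred_eq, not_le, real_inner_comm (leftNormal θ),
      inner_sub_right, sub_neg]
  exact this ▸ convex_halfSpace_lt (innerSL ℝ (leftNormal θ)).isLinear _

section HalfPlane

variable {μ : Measure (EuclideanSpace ℝ (Fin 2))} [μ.IsAddHaarMeasure]
  {C : Set (EuclideanSpace ℝ (Fin 2))} {P : EuclideanSpace ℝ (Fin 2)}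

theorem continuous_measure_inter_halfPlane (hC : MeasurableSet C) (hCfin : μ C ≠ ∞) :
    Continuous fun θ => μ (C ∩ halfPlane P θ) := by
  refine continuous_iff_continuousAt.2 fun θ₀ =>
    continuousAt_measure_inter_setOf_nonneg hC hCfin (fun θ => ?_) (fun x => ?_)
      (addHaar_setOf_inner_sub_eq_zero μ P (leftNormal_ne_zero θ₀))
  · fun_prop
  · simp only [inner_leftNormal]
    fun_prop

theorem measure_inter_halfPlane_lt (hC : Convex ℝ C) (hCfin : μ C ≠ ∞) {α θ₁ θ₂ : ℝ}
    (hα : μ (C ∩ halfPlane P α) = 0) (hαθ₁ : α < θ₁) (hθ₁₂ : θ₁ < θ₂) (hθ₂ : θ₂ < α + π)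
    (h₁ : μ (C ∩ halfPlane P θ₁) ≠ 0) (h₂ : μ (C ∩ halfPlane P θ₂) < μ C) :
    μ (C ∩ halfPlane P θ₁) < μ (C ∩ halfPlane P θ₂) := by
  have hcont : ∀ θ, Continuous fun x => ⟪x - P, leftNormal θ⟫ := fun θ => by fun_prop
  let O := interior C \ halfPlane P α
  have hO_open : IsOpen O := isOpen_interior.sdiff (isClosed_le continuous_const (hcont α))
  have hOC : ∀ s, μ (O ∩ s) = μ (C ∩ s) := fun s =>
    measure_congr ((hC.interior_diff_ae_eq hα).inter (ae_eq_refl s))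
  have hsweep : ∀ x ∈ O, 0 ≤ ⟪x - P, leftNormal θ₁⟫ → 0 < ⟪x - P, leftNormal θ₂⟫ :=
    fun x hx h => inner_leftNormal_pos_of_nonneg (not_le.1 hx.2) h hαθ₁ hθ₁₂ hθ₂
  have hO₁ : ∃ x ∈ O, 0 ≤ ⟪x - P, leftNormal θ₁⟫ := by
    obtain ⟨x, hxO, hx⟩ := nonempty_of_measure_ne_zero (μ := μ) (s := O ∩ halfPlane P θ₁)
      (by rwa [hOC])
    exact ⟨x, hxO, hx⟩
  have hO₂ : ∃ x ∈ O, ⟪x - P, leftNormal θ₂⟫ ≤ 0 := by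
    have : μ (O \ halfPlane P θ₂) ≠ 0 := fun h =>
      h₂.ne (by rw [← hOC, measure_inter_conull' h, ← inter_univ O, hOC, inter_univ])
    obtain ⟨x, hxO, hx⟩ := nonempty_of_measure_ne_zero this
    exact ⟨x, hxO, (not_le.1 hx).le⟩
  let W := O ∩ {x | ⟪x - P, leftNormal θ₁⟫ < 0 ∧ 0 < ⟪x - P, leftNormal θ₂⟫}
  have hW_open : IsOpen W := hO_open.inter <|
    (isOpen_lt (hcont θ₁) continuous_const).inter (isOpen_lt continuous_const (hcont θ₂))
  have hW_pos : 0 < μ W := by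
    obtain ⟨x, hxO, hx⟩ := (hC.interior.inter (convex_compl_halfPlane P α)).isPreconnected
      |>.exists_neg_and_pos (hcont θ₁) (hcont θ₂) hsweep hO₁ hO₂
    exact hW_open.measure_pos μ ⟨x, hxO, hx⟩
  calc μ (C ∩ halfPlane P θ₁)
      < μ (C ∩ halfPlane P θ₁) + μ W :=
      ENNReal.lt_add_right (measure_ne_top_of_subset inter_subset_left hCfin) hW_pos.ne'
    _ = μ (O ∩ halfPlane P θ₁) + μ W := by rw [hOC (halfPlane P θ₁)]
    _ = μ (O ∩ halfPlane P θ₁ ∪ W) :=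
      (measure_union (disjoint_left.2 fun x hx hW => hW.2.1.not_ge hx.2) hW_open.measurableSet).symm
    _ ≤ μ (O ∩ halfPlane P θ₂) :=
      measure_mono (union_subset (fun x hx => ⟨hx.1, (hsweep x hx.1 hx.2).le⟩)
        fun x hx => ⟨hx.1, hx.2.2.le⟩)
    _ = μ (C ∩ halfPlane P θ₂) := hOC _

end HalfPlane

/-- If the line through `P` sweeps across the compact convex region `C` exactly once
as the angle goes from `α` to `β` (with `β - α < π`), then for every proper fraction
`t ∈ (0,1)` there is a unique angle `θ ∈ [α, β]` at which the swept area equals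
`t · area C`. -/
theorem existsUnique_halfplane_area_fraction_of_sweep
    (C : Set (EuclideanSpace ℝ (Fin 2))) (hCcompact : IsCompact C) (hCconv : Convex ℝ C)
    (hCpos : 0 < volume C)
    (P : EuclideanSpace ℝ (Fin 2))
    (H : EuclideanSpace ℝ (Fin 2) → ℝ → Set (EuclideanSpace ℝ (Fin 2)))
    (hH : ∀ Q θ, H Q θ =
      {x | 0 ≤ ⟪x - Q, (WithLp.toLp 2 ![-Real.sin θ, Real.cos θ] : EuclideanSpace ℝ (Fin 2))⟫})
    (A : ℝ → ℝ≥0∞) (hA : ∀ θ, A θ = volume (C ∩ H P θ))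
    (α β : ℝ) (hαβ : α < β) (hπ : β - α < Real.pi)
    (hα : A α = 0) (hβ : A β = volume C)
    (t : ℝ) (ht : t ∈ Set.Ioo (0 : ℝ) 1) :
    ∃! θ : ℝ, θ ∈ Set.Icc α β ∧ A θ = ENNReal.ofReal t * volume C := by
  obtain rfl : H = halfPlane := funext₂ hH
  have hCfin : volume C ≠ ∞ := hCcompact.measure_lt_top.ne
  have hAcont : Continuous A := by
    simpa only [← hA] using
      continuous_measure_inter_halfPlane (P := P) hCcompact.measurableSet hCfin
  have hmono : StrictMonoOn A (Icc α β ∩ A ⁻¹' Ioo 0 (volume C)) := by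
    rintro θ₁ ⟨⟨hαθ₁, -⟩, h₁⟩ θ₂ ⟨⟨-, hθ₂β⟩, h₂⟩ hθ₁₂
    have hαθ₁ : α < θ₁ := hαθ₁.lt_of_ne (by rintro rfl; exact h₁.1.ne' hα)
    rw [mem_preimage, hA] at h₁ h₂
    rw [hA, hA]
    exact measure_inter_halfPlane_lt hCconv hCfin (hA α ▸ hα) hαθ₁ hθ₁₂ (by linarith) h₁.1.ne' h₂.2
  have htV : ENNReal.ofReal t * volume C ∈ Ioo 0 (volume C) := by
    refine ⟨ENNReal.mul_pos (ENNReal.ofReal_pos.2 ht.1).ne' hCpos.ne', ?_⟩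
    calc ENNReal.ofReal t * volume C < 1 * volume C :=
          ENNReal.mul_lt_mul_left hCpos.ne' hCfin (ENNReal.ofReal_lt_one.2 ht.2)
      _ = volume C := one_mul _
  obtain ⟨θ, hθ, hθA⟩ := intermediate_value_Icc hαβ.le hAcont.continuousOn
    (show _ ∈ Icc (A α) (A β) by rw [hα, hβ]; exact Ioo_subset_Icc_self htV)
  refine ⟨θ, ⟨hθ, hθA⟩, fun θ' ⟨hθ', hθ'A⟩ => hmono.injOn ⟨hθ', ?_⟩ ⟨hθ, ?_⟩ (hθ'A.trans hθA.symm)⟩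
  · rwa [mem_preimage, hθ'A]
  · rwa [mem_preimage, hθA]
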